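/- Fix s ∈ ℝ. On L²((0,∞), ℂ) define: (M_sF)(ξ) = ξ^{is}F(ξ) with ξ^{is} = exp(is·log ξ); (D_a^{(s)}F)(ξ) = a^{-1/2} a^{is} F(a⁻¹ξ) for a > 0; and (T_bF)(ξ) = e^{ibξ}F(ξ) for b ∈ ℝ. Then for every a > 0 and b ∈ ℝ one has the intertwining identities M_s ∘ D_a^{(0)} = D_a^{(s)} ∘ M_s and M_s ∘ T_b = T_b ∘ M_s (as operators on L²((0,∞), ℂ)). Consequently the unitary operator M_s conjugates the family {D_a^{(0)}, T_b} into the family {D_a^{(s)}, T_b}. -/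

import Mathlib

/-- Multiplication by `ξ^{is} = exp(i s log ξ)`. -/
noncomputable def multChar (s : ℝ) (F : ℝ → ℂ) : ℝ → ℂ :=
  fun ξ => Complex.exp (Complex.I * s * Real.log ξ) * F ξ

/-- The twisted dilation `(D_a^{(s)}F)(ξ) = a^{-1/2} a^{is} F(a⁻¹ξ)`. -/
noncomputable def twistedDilation (s a : ℝ) (F : ℝ → ℂ) : ℝ → ℂ :=
  fun ξ => (↑(a ^ (-(1 / 2) : ℝ)) : ℂ) * Complex.exp (Complex.I * s * Real.log a) *
    F (a⁻¹ * ξ)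

/-- Multiplication by the character `ξ ↦ e^{ibξ}`. -/
noncomputable def multExp (b : ℝ) (F : ℝ → ℂ) : ℝ → ℂ :=
  fun ξ => Complex.exp (Complex.I * b * ξ) * F ξ

/-! `M_s` is multiplication by a character of the multiplicative group `(0,∞)`, so it commutes
with the multiplication operators `T_b` and turns the dilation `D_a^{(0)}` into `D_a^{(s)}`: the
factor `a^{is}` is what is left of `ξ^{is} = a^{is} (a⁻¹ξ)^{is}`. -/

theorem exp_I_mul_log_mul (s : ℝ) {x y : ℝ} (hx : x ≠ 0) (hy : y ≠ 0) :
    Complex.exp (Complex.I * s * Real.log (x * y)) =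
      Complex.exp (Complex.I * s * Real.log x) * Complex.exp (Complex.I * s * Real.log y) := by
  rw [Real.log_mul hx hy, ← Complex.exp_add]
  push_cast
  congr 1
  ring

theorem multChar_twistedDilation_zero_apply (s : ℝ) {a ξ : ℝ} (ha : a ≠ 0) (hξ : ξ ≠ 0)
    (F : ℝ → ℂ) :
    multChar s (twistedDilation 0 a F) ξ = twistedDilation s a (multChar s F) ξ := by
  have hchar : Complex.exp (Complex.I * s * Real.log ξ) =
      Complex.exp (Complex.I * s * Real.log a) *
        Complex.exp (Complex.I * s * Real.log (a⁻¹ * ξ)) := by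
    rw [← exp_I_mul_log_mul s ha (mul_ne_zero (inv_ne_zero ha) hξ), mul_inv_cancel_left₀ ha]
  simp only [multChar, twistedDilation, Complex.ofReal_zero, mul_zero, zero_mul,
    Complex.exp_zero, mul_one]
  rw [hchar]
  ring

theorem multChar_multExp (s b : ℝ) (F : ℝ → ℂ) :
    multChar s (multExp b F) = multExp b (multChar s F) := by
  funext ξ
  simp only [multChar, multExp]
  ring

/-- The intertwining identities `M_s ∘ D_a^{(0)} = D_a^{(s)} ∘ M_s` and
`M_s ∘ T_b = T_b ∘ M_s` as operators on `L²((0,∞), ℂ)`, i.e. pointwise on `(0,∞)`. -/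
theorem multChar_intertwines (s : ℝ) (a b : ℝ) (ha : 0 < a) (F : ℝ → ℂ) :
    (∀ ξ ∈ Set.Ioi (0 : ℝ),
      multChar s (twistedDilation 0 a F) ξ = twistedDilation s a (multChar s F) ξ)
    ∧ (∀ ξ ∈ Set.Ioi (0 : ℝ),
      multChar s (multExp b F) ξ = multExp b (multChar s F) ξ) :=
  ⟨fun _ hξ => multChar_twistedDilation_zero_apply s ha.ne' (ne_of_gt hξ) F,
    fun _ _ => by rw [multChar_multExp]⟩
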